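/- arXiv:0903.4883 — 4 statements merged into one kernel-verified Lean document; each statement's English description precedes it below -/
import Mathlib

section
/- Let f be a complex function analytic on an open set containing the closed unit disk with f(0) = 0, c_d = f^{(d)}(0)/d!, and let s > 1 be real and M ≥ 1 an integer. Define the truncation error E(f, M, s) = |∑_{n=M+1}^{∞} (log ζ(ns))/n · ∑_{d|n} d · c_d · μ(n/d)|. Then E(f, M, s) ≤ (2^{s+1}(2^s + 1)(s + 1))/(π (2^s − 1)^3) · (∫_0^{2π} |f(e^{it})| dt) · M^2 / ((sM + s − 1) 2^{sM}). -/
/-!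
Write `N = n + M + 1` for the index of a tail term and `x = 2^{-s}`. The Cauchy estimate on the
unit circle bounds each `|c_d|` by `(2π)⁻¹ ∫ |f(e^{it})| dt`, so the divisor sum is at most `N²`
times this. Comparing the tail of `ζ` with `∫ t^{-y} dt` gives
`log ζ(y) ≤ ζ(y) - 1 ≤ 2^{-y} (y + 1)/(y - 1)`. Since `N ≤ (M + 1)(n + 1)`, the tail is dominated
by `(M + 1)² x^{M+1} ∑ (n + 1)² xⁿ = (M + 1)² x^{M+1} (1 + x)/(1 - x)³`, and `(M + 1)² ≤ 4M²`
gives the constant.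
-/

open scoped Real

/-- The Riemann zeta function for real argument `x > 1`, `ζ(x) = ∑_{n ≥ 1} n^{-x}`. -/
noncomputable def zetaR (x : ℝ) : ℝ := ∑' n : ℕ, ((n : ℝ) + 1) ^ (-x)

lemma summable_zetaR_terms {x : ℝ} (hx : 1 < x) :
    Summable (fun n : ℕ => ((n : ℝ) + 1) ^ (-x)) := by
  simpa using (summable_nat_add_iff 1).2 (Real.summable_nat_rpow.2 (neg_lt_neg hx))

lemma one_le_zetaR {x : ℝ} (hx : 1 < x) : 1 ≤ zetaR x := by
  unfold zetaR
  simpa using (summable_zetaR_terms hx).le_tsum 0 fun n _ => by positivity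

lemma tsum_add_three_rpow_neg_le {x : ℝ} (hx : 1 < x) :
    ∑' n : ℕ, ((n : ℝ) + 3) ^ (-x) ≤ 2 ^ (1 - x) / (x - 1) := by
  refine Real.tsum_le_of_sum_range_le (fun n => by positivity) fun N => ?_
  have hanti : AntitoneOn (fun t : ℝ => t ^ (-x)) (Set.Icc 2 (2 + N)) := fun a ha b _ hab =>
    Real.rpow_le_rpow_of_nonpos (by linarith [ha.1]) hab (by linarith)
  have hint :
      ∫ t in (2 : ℝ)..2 + N, t ^ (-x) = (2 ^ (1 - x) - (2 + N) ^ (1 - x)) / (x - 1) := by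
    rw [integral_rpow (Or.inr ⟨by linarith, by simp⟩), show -x + 1 = 1 - x by ring,
      ← neg_div_neg_eq]
    ring_nf
  calc ∑ i ∈ Finset.range N, ((i : ℝ) + 3) ^ (-x)
      = ∑ i ∈ Finset.range N, (2 + ((i + 1 : ℕ) : ℝ)) ^ (-x) := by
        push_cast; ring_nf
    _ ≤ ∫ t in (2 : ℝ)..2 + N, t ^ (-x) := hanti.sum_le_integral
    _ ≤ 2 ^ (1 - x) / (x - 1) := by
        rw [hint]
        gcongr
        linarith [Real.rpow_nonneg (by positivity : (0:ℝ) ≤ 2 + N) (1 - x)]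

lemma log_zetaR_le {x : ℝ} (hx : 1 < x) :
    Real.log (zetaR x) ≤ 2 ^ (-x) * ((x + 1) / (x - 1)) := by
  have hsplit : zetaR x = 1 + 2 ^ (-x) + ∑' n : ℕ, ((n : ℝ) + 3) ^ (-x) := by
    rw [zetaR, ← (summable_zetaR_terms hx).sum_add_tsum_nat_add 2]
    norm_num [Finset.sum_range_succ]
    ring_nf
  have h2 : (2 : ℝ) ^ (1 - x) = 2 * 2 ^ (-x) := by
    rw [sub_eq_add_neg, Real.rpow_add two_pos, Real.rpow_one]
  calc Real.log (zetaR x) ≤ zetaR x - 1 :=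
        Real.log_le_sub_one_of_pos (one_pos.trans_le (one_le_zetaR hx))
    _ ≤ 2 ^ (-x) + 2 ^ (1 - x) / (x - 1) := by
        rw [hsplit]; linarith [tsum_add_three_rpow_neg_le hx]
    _ = 2 ^ (-x) * ((x + 1) / (x - 1)) := by
        rw [h2]; field_simp [(by linarith : x - 1 ≠ 0)]; ring

lemma norm_iteratedDeriv_div_factorial_le_circleIntegral {f : ℂ → ℂ}
    (hf : DifferentiableOn ℂ f (Metric.closedBall 0 1)) (d : ℕ) :
    ‖iteratedDeriv d f 0 / (d.factorial : ℂ)‖ ≤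
      (2 * π)⁻¹ * ∫ t in (0 : ℝ)..2 * π, ‖f (Complex.exp (t * Complex.I))‖ := by
  have hps := (show DifferentiableOn ℂ f (Metric.closedBall 0 (1 : NNReal)) by simpa using hf)
    |>.hasFPowerSeriesOnBall one_pos
  have hcoeff : iteratedDeriv d f 0 / (d.factorial : ℂ) =
      cauchyPowerSeries f 0 (1 : NNReal) d (fun _ => 1) := by
    rw [iteratedDeriv_eq_iteratedFDeriv, ← hps.factorial_smul 1 d, nsmul_eq_mul,
      mul_div_cancel_left₀ _ (by exact_mod_cast d.factorial_ne_zero)]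
  calc ‖iteratedDeriv d f 0 / (d.factorial : ℂ)‖
      ≤ ‖cauchyPowerSeries f 0 (1 : NNReal) d‖ := by
        simpa only [hcoeff, norm_one, Finset.prod_const_one, mul_one] using
          (cauchyPowerSeries f 0 (1 : NNReal) d).le_opNorm fun _ => 1
    _ ≤ (2 * π)⁻¹ * ∫ t in (0 : ℝ)..2 * π, ‖f (circleMap 0 1 t)‖ := by
        simpa using norm_cauchyPowerSeries_le f 0 1 d
    _ = (2 * π)⁻¹ * ∫ t in (0 : ℝ)..2 * π, ‖f (Complex.exp (t * Complex.I))‖ := by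
        simp [circleMap]

lemma norm_sum_divisors_mul_moebius_le {a : ℕ → ℂ} {C : ℝ} (ha : ∀ d, ‖a d‖ ≤ C) (m : ℕ) :
    ‖∑ d ∈ m.divisors, (d : ℂ) * a d * (ArithmeticFunction.moebius (m / d) : ℂ)‖ ≤
      (m : ℝ) ^ 2 * C := by
  have hC : 0 ≤ C := (norm_nonneg _).trans (ha 0)
  have hterm : ∀ d ∈ m.divisors,
      ‖(d : ℂ) * a d * (ArithmeticFunction.moebius (m / d) : ℂ)‖ ≤ m * C := fun d hd => by
    have hdm : (d : ℝ) ≤ m := by exact_mod_cast Nat.divisor_le hd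
    have hμ : ‖(ArithmeticFunction.moebius (m / d) : ℂ)‖ ≤ 1 := by
      rw [Complex.norm_intCast]; exact_mod_cast ArithmeticFunction.abs_moebius_le_one
    rw [norm_mul, norm_mul, Complex.norm_natCast]
    calc (d : ℝ) * ‖a d‖ * ‖(ArithmeticFunction.moebius (m / d) : ℂ)‖ ≤ m * C * 1 := by
          gcongr; exact ha d
      _ = m * C := mul_one _
  calc ‖∑ d ∈ m.divisors, (d : ℂ) * a d * (ArithmeticFunction.moebius (m / d) : ℂ)‖
      ≤ m.divisors.card * (m * C) :=
        (norm_sum_le _ _).trans ((Finset.sum_le_card_nsmul _ _ _ hterm).trans_eq (nsmul_eq_mul _ _))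
    _ ≤ m * (m * C) := by gcongr; exact_mod_cast Nat.card_divisors_le_self m
    _ = (m : ℝ) ^ 2 * C := by ring

lemma hasSum_add_one_sq_mul_geometric {x : ℝ} (hx : |x| < 1) :
    HasSum (fun k : ℕ => ((k : ℝ) + 1) ^ 2 * x ^ k) ((1 + x) / (1 - x) ^ 3) := by
  have hx' : ‖x‖ < 1 := hx
  have hne : 1 - x ≠ 0 := by linarith [le_abs_self x]
  convert ((hasSum_choose_mul_geometric_of_norm_lt_one 2 hx').mul_left 2).sub
      (hasSum_choose_mul_geometric_of_norm_lt_one 1 hx') using 1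
  · rfl
  · funext k
    rw [Nat.cast_choose_two]
    push_cast [Nat.choose_one_right]
    ring
  · field_simp
    ring

lemma summable_and_norm_tsum_le_of_norm_le_sq_mul_geometric {E : Type*}
    [NormedAddCommGroup E] [CompleteSpace E] {g : ℕ → E} {B x : ℝ} (hx : |x| < 1)
    (hg : ∀ n, ‖g n‖ ≤ B * (((n : ℝ) + 1) ^ 2 * x ^ n)) :
    Summable g ∧ ‖∑' n, g n‖ ≤ B * ((1 + x) / (1 - x) ^ 3) := by
  have hB := (hasSum_add_one_sq_mul_geometric hx).mul_left B
  exact ⟨.of_norm_bounded hB.summable hg, tsum_of_norm_bounded hB hg⟩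

lemma log_zetaR_mul_le {s : ℝ} (hs : 1 < s) {M N : ℕ} (hMN : M + 1 ≤ N) :
    Real.log (zetaR (N * s)) ≤ (2 ^ (-s)) ^ N * (N * (s + 1) / (s * M + s - 1)) := by
  have hMN' : (M : ℝ) + 1 ≤ N := by exact_mod_cast hMN
  have hM : (0 : ℝ) ≤ M := M.cast_nonneg
  have hq : 0 < s * M + s - 1 := by nlinarith
  have hNs : s * M + s - 1 ≤ N * s - 1 := by nlinarith
  calc Real.log (zetaR (N * s)) ≤ 2 ^ (-(N * s)) * ((N * s + 1) / (N * s - 1)) :=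
        log_zetaR_le (by nlinarith)
    _ ≤ (2 ^ (-s)) ^ N * (N * (s + 1) / (s * M + s - 1)) := by
        rw [← Real.rpow_natCast, ← Real.rpow_mul zero_le_two, neg_mul, mul_comm s]
        gcongr 2 ^ _ * ?_
        exact div_le_div₀ (by positivity) (by nlinarith) hq hNs

lemma norm_tail_term_le {a : ℕ → ℂ} {C : ℝ} (ha : ∀ d, ‖a d‖ ≤ C) {s : ℝ} (hs : 1 < s)
    (M n : ℕ) :
    ‖((Real.log (zetaR (((n : ℝ) + M + 1) * s)) / ((n : ℝ) + M + 1) : ℝ) : ℂ) *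
        ∑ d ∈ (n + M + 1).divisors,
          (d : ℂ) * a d * (ArithmeticFunction.moebius ((n + M + 1) / d) : ℂ)‖ ≤
      C * (s + 1) / (s * M + s - 1) * ((M : ℝ) + 1) ^ 2 * (2 ^ (-s)) ^ (M + 1) *
        (((n : ℝ) + 1) ^ 2 * (2 ^ (-s)) ^ n) := by
  set N := n + M + 1 with hN
  set x : ℝ := 2 ^ (-s)
  have hC : 0 ≤ C := (norm_nonneg _).trans (ha 0)
  have hx : 0 ≤ x := by positivity
  have hq : 0 < s * M + s - 1 := by nlinarith [M.cast_nonneg (α := ℝ)]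
  have hNpos : (0 : ℝ) < N := by positivity
  have hlog : 0 ≤ Real.log (zetaR (N * s)) := Real.log_nonneg (one_le_zetaR (by
    have : (1 : ℝ) ≤ N := by exact_mod_cast Nat.le_add_left 1 _
    nlinarith))
  have hsplit :
      (N : ℝ) ^ 2 * x ^ N ≤ ((M : ℝ) + 1) ^ 2 * x ^ (M + 1) * ((n + 1) ^ 2 * x ^ n) := by
    have : (N : ℝ) ≤ (M + 1) * (n + 1) := by
      push_cast [hN]; nlinarith [n.cast_nonneg (α := ℝ), M.cast_nonneg (α := ℝ)]
    calc (N : ℝ) ^ 2 * x ^ N ≤ ((M + 1) * (n + 1)) ^ 2 * x ^ N := by gcongr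
      _ = ((M : ℝ) + 1) ^ 2 * x ^ (M + 1) * ((n + 1) ^ 2 * x ^ n) := by
        rw [hN, show n + M + 1 = M + 1 + n by ring, pow_add]; ring
  have hcast : ((n : ℝ) + M + 1) = N := by push_cast [hN]; ring
  rw [hcast, norm_mul, Complex.norm_real, Real.norm_of_nonneg (by positivity)]
  calc Real.log (zetaR (N * s)) / N * ‖∑ d ∈ N.divisors,
          (d : ℂ) * a d * (ArithmeticFunction.moebius (N / d) : ℂ)‖
      ≤ Real.log (zetaR (N * s)) / N * (N ^ 2 * C) := by
        gcongr; exact norm_sum_divisors_mul_moebius_le ha N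
    _ = Real.log (zetaR (N * s)) * (N * C) := by field_simp
    _ ≤ x ^ N * (N * (s + 1) / (s * M + s - 1)) * (N * C) := by
        gcongr; exact log_zetaR_mul_le hs (by omega)
    _ = C * (s + 1) / (s * M + s - 1) * (N ^ 2 * x ^ N) := by ring
    _ ≤ C * (s + 1) / (s * M + s - 1) *
          (((M : ℝ) + 1) ^ 2 * x ^ (M + 1) * ((n + 1) ^ 2 * x ^ n)) := by gcongr
    _ = _ := by ring

lemma tail_majorant_le {s A : ℝ} (hs : 1 < s) (hA : 0 ≤ A) {M : ℕ} (hM : 1 ≤ M) :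
    (2 * π)⁻¹ * A * (s + 1) / (s * M + s - 1) * ((M : ℝ) + 1) ^ 2 * (2 ^ (-s)) ^ (M + 1) *
        ((1 + 2 ^ (-s)) / (1 - 2 ^ (-s)) ^ 3) ≤
      (2 : ℝ) ^ (s + 1) * ((2 : ℝ) ^ s + 1) * (s + 1) / (π * ((2 : ℝ) ^ s - 1) ^ 3) * A *
        (M : ℝ) ^ 2 / ((s * M + s - 1) * (2 : ℝ) ^ (s * M)) := by
  have hM' : (1 : ℝ) ≤ M := by exact_mod_cast hM
  have hu : 1 < (2 : ℝ) ^ s := Real.one_lt_rpow one_lt_two (by linarith)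
  rw [Real.rpow_neg zero_le_two, Real.rpow_add two_pos, Real.rpow_one, Real.rpow_mul zero_le_two,
    Real.rpow_natCast]
  generalize (2 : ℝ) ^ s = u at hu ⊢
  have hq : 0 < s * M + s - 1 := by nlinarith
  have hu1 : 0 < u - 1 := by linarith
  set c := (s + 1) * A * u * (u + 1) / (2 * π * (s * M + s - 1) * (u - 1) ^ 3 * u ^ M)
    with hc_def
  have hc : 0 ≤ c := by positivity
  have hu0 : u ≠ 0 := by positivity
  calc _ = c * ((M : ℝ) + 1) ^ 2 := by
        rw [hc_def, show 1 - u⁻¹ = (u - 1) / u by field_simp, inv_pow, pow_succ]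
        field_simp
        ring
    _ ≤ c * (4 * M ^ 2) := by gcongr; nlinarith
    _ = _ := by rw [hc_def]; field_simp; ring

theorem statement2_general (f : ℂ → ℂ) (U : Set ℂ)
    (hUball : Metric.closedBall (0 : ℂ) 1 ⊆ U)
    (hf : AnalyticOnNhd ℂ f U)
    (s : ℝ) (hs : 1 < s) (M : ℕ) (hM : 1 ≤ M) :
    Summable
      (fun n : ℕ =>
        ((Real.log (zetaR (((n : ℝ) + M + 1) * s)) / ((n : ℝ) + M + 1) : ℝ) : ℂ) *
          ∑ d ∈ (n + M + 1).divisors,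
            (d : ℂ) * (iteratedDeriv d f 0 / (Nat.factorial d : ℂ)) *
              (ArithmeticFunction.moebius ((n + M + 1) / d) : ℂ)) ∧
    ‖∑' n : ℕ,
        ((Real.log (zetaR (((n : ℝ) + M + 1) * s)) / ((n : ℝ) + M + 1) : ℝ) : ℂ) *
          ∑ d ∈ (n + M + 1).divisors,
            (d : ℂ) * (iteratedDeriv d f 0 / (Nat.factorial d : ℂ)) *
              (ArithmeticFunction.moebius ((n + M + 1) / d) : ℂ)‖ ≤
      (2 : ℝ) ^ (s + 1) * ((2 : ℝ) ^ s + 1) * (s + 1) / (π * ((2 : ℝ) ^ s - 1) ^ 3) *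
        (∫ t in (0 : ℝ)..(2 * π), ‖f (Complex.exp ((t : ℂ) * Complex.I))‖) *
        (M : ℝ) ^ 2 / ((s * M + s - 1) * (2 : ℝ) ^ (s * M)) := by
  have hcoeff := norm_iteratedDeriv_div_factorial_le_circleIntegral (f := f) fun z hz =>
    (hf z (hUball hz)).differentiableAt.differentiableWithinAt
  have hx : |(2 : ℝ) ^ (-s)| < 1 := by
    rw [abs_of_pos (by positivity)]
    exact Real.rpow_lt_one_of_one_lt_of_neg one_lt_two (by linarith)
  have hA : 0 ≤ ∫ t in (0 : ℝ)..(2 * π), ‖f (Complex.exp ((t : ℂ) * Complex.I))‖ :=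
    intervalIntegral.integral_nonneg (by positivity) fun _ _ => norm_nonneg _
  obtain ⟨hsum, hle⟩ :=
    summable_and_norm_tsum_le_of_norm_le_sq_mul_geometric hx (norm_tail_term_le hcoeff hs M)
  exact ⟨hsum, hle.trans (tail_majorant_le hs hA hM)⟩

/-- Truncation-error bound for the expansion of `∑_p f(p^{-s})`:
the tail `E(f,M,s) = |∑_{n > M} (log ζ(ns))/n · ∑_{d∣n} d·c_d·μ(n/d)|` satisfies
`E(f,M,s) ≤ 2^{s+1}(2^s+1)(s+1)/(π(2^s-1)^3) · (∫_0^{2π}|f(e^{it})|dt) · M²/((sM+s-1)2^{sM})`. -/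
theorem statement2 (f : ℂ → ℂ) (U : Set ℂ) (hU : IsOpen U)
    (hUball : Metric.closedBall (0 : ℂ) 1 ⊆ U)
    (hf : AnalyticOnNhd ℂ f U) (hf0 : f 0 = 0)
    (s : ℝ) (hs : 1 < s) (M : ℕ) (hM : 1 ≤ M) :
    Summable
      (fun n : ℕ =>
        ((Real.log (zetaR (((n : ℝ) + M + 1) * s)) / ((n : ℝ) + M + 1) : ℝ) : ℂ) *
          ∑ d ∈ (n + M + 1).divisors,
            (d : ℂ) * (iteratedDeriv d f 0 / (Nat.factorial d : ℂ)) *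
              (ArithmeticFunction.moebius ((n + M + 1) / d) : ℂ)) ∧
    ‖∑' n : ℕ,
        ((Real.log (zetaR (((n : ℝ) + M + 1) * s)) / ((n : ℝ) + M + 1) : ℝ) : ℂ) *
          ∑ d ∈ (n + M + 1).divisors,
            (d : ℂ) * (iteratedDeriv d f 0 / (Nat.factorial d : ℂ)) *
              (ArithmeticFunction.moebius ((n + M + 1) / d) : ℂ)‖ ≤
      (2 : ℝ) ^ (s + 1) * ((2 : ℝ) ^ s + 1) * (s + 1) / (π * ((2 : ℝ) ^ s - 1) ^ 3) *
        (∫ t in (0 : ℝ)..(2 * π), ‖f (Complex.exp ((t : ℂ) * Complex.I))‖) *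
        (M : ℝ) ^ 2 / ((s * M + s - 1) * (2 : ℝ) ^ (s * M)) :=
  statement2_general f U hUball hf s hs M hM
end

section
/- Let f be a complex function analytic on an open set containing the closed unit disk with f(0) = 0, and write c_d = f^{(d)}(0)/d!. Then for every real s > 1, ∑_{p prime} f'(p^{−s}) · p^{−s} · log p = −∑_{n=1}^{∞} (ζ'(ns)/ζ(ns)) · ∑_{d | n} d · c_d · μ(n/d), where both series converge. -/
/-- The derivative of the (real) Riemann zeta function. -/
noncomputable def zetaDerivR (x : ℝ) : ℝ := deriv zetaR x

open ArithmeticFunction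
open scoped ArithmeticFunction.Moebius LSeries.notation

theorem HasSum.sum_divisorsAntidiagonal {α : Type*} [AddCommGroup α] [TopologicalSpace α]
    [IsTopologicalAddGroup α] [RegularSpace α] {F : ℕ → ℕ → α} {S : α}
    (h : HasSum (fun jn : ℕ × ℕ => F (jn.1 + 1) (jn.2 + 1)) S) :
    HasSum (fun k : ℕ => ∑ x ∈ k.divisorsAntidiagonal, F x.1 x.2) S := by
  have hpnat : HasSum (fun c : ℕ+ × ℕ+ => F c.1 c.2) S :=
    (Equiv.pnatEquivNat.prodCongr Equiv.pnatEquivNat).symm.hasSum_iff.mp h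
  have hsigma : HasSum (fun n : ℕ+ => ∑ x ∈ (n : ℕ).divisorsAntidiagonal, F x.1 x.2) S := by
    refine (sigmaAntidiagonalEquivProd.hasSum_iff.mpr hpnat).sigma fun n => ?_
    rw [← Finset.sum_coe_sort]
    exact hasSum_fintype _
  refine (PNat.coe_injective.hasSum_iff fun k hk => ?_).mp hsigma
  obtain rfl : k = 0 := by
    by_contra h0
    exact hk ⟨⟨k, Nat.pos_of_ne_zero h0⟩, rfl⟩
  simp

theorem hasSum_lambert {b : ℕ → ℂ} {y A : ℂ}
    (hs : Summable fun jn : ℕ × ℕ => b (jn.2 + 1) * y ^ ((jn.1 + 1) * (jn.2 + 1)))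
    (hA : HasSum (fun k => (∑ d ∈ k.divisors, b d) * y ^ k) A) :
    HasSum (fun jn : ℕ × ℕ => b (jn.2 + 1) * y ^ ((jn.1 + 1) * (jn.2 + 1))) A := by
  obtain rfl := hA.unique <| (hs.hasSum.sum_divisorsAntidiagonal
    (F := fun m d => b d * y ^ (m * d))).congr_fun fun k => by
      rw [Nat.sum_divisorsAntidiagonal' (f := fun m d => b d * y ^ (m * d)), Finset.sum_mul]
      exact Finset.sum_congr rfl fun d hd => by
        rw [Nat.div_mul_cancel (Nat.dvd_of_mem_divisors hd)]
  exact hs.hasSum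

noncomputable def moebiusTransform {R : Type*} [Ring R] (a : ℕ → R) (n : ℕ) : R :=
  ∑ d ∈ n.divisors, a d * (μ (n / d) : R)

theorem sum_divisors_moebiusTransform {R : Type*} [Ring R] {a : ℕ → R} (ha : a 0 = 0)
    (k : ℕ) : ∑ d ∈ k.divisors, moebiusTransform a d = a k := by
  rcases k.eq_zero_or_pos with rfl | hk
  · simp [ha]
  refine sum_eq_iff_sum_mul_moebius_eq.mpr (fun n _ => ?_) k hk
  rw [Nat.sum_divisorsAntidiagonal' (f := fun i j => (μ i : R) * a j), moebiusTransform]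
  exact Finset.sum_congr rfl fun d _ => Int.cast_comm _ _

theorem norm_moebiusTransform_le {E : Type*} [NormedRing E] [NormOneClass E]
    [NormSMulClass ℤ E] {a : ℕ → E} {C : ℝ} (ha : ∀ d, ‖a d‖ ≤ C) (n : ℕ) :
    ‖moebiusTransform a n‖ ≤ C * n := by
  have hC : 0 ≤ C := (norm_nonneg _).trans (ha 0)
  calc ‖moebiusTransform a n‖ ≤ ∑ d ∈ n.divisors, ‖a d * (μ (n / d) : E)‖ := norm_sum_le _ _
    _ ≤ ∑ d ∈ n.divisors, C := by
        refine Finset.sum_le_sum fun d _ => (norm_mul_le _ _).trans ?_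
        rw [norm_intCast_eq_abs_mul_norm_one, norm_one, mul_one]
        exact (mul_le_of_le_one_right (norm_nonneg _)
          (by exact_mod_cast abs_moebius_le_one)).trans (ha d)
    _ ≤ C * n := by
        rw [Finset.sum_const, nsmul_eq_mul, mul_comm]
        exact mul_le_mul_of_nonneg_left (by exact_mod_cast Nat.card_divisors_le_self n) hC

noncomputable def mulDerivCoeff (f : ℂ → ℂ) (d : ℕ) : ℂ :=
  (d : ℂ) * (iteratedDeriv d f 0 / (Nat.factorial d : ℂ))

theorem hasSum_mulDerivCoeff_mul_pow {f : ℂ → ℂ} {r : ℝ}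
    (hf : DifferentiableOn ℂ f (Metric.ball 0 r)) {z : ℂ} (hz : ‖z‖ < r) :
    HasSum (fun d => mulDerivCoeff f d * z ^ d) (deriv f z * z) := by
  have hTaylor := (Complex.hasSum_taylorSeries_on_ball (hf.deriv Metric.isOpen_ball)
    (mem_ball_zero_iff.mpr hz)).mul_right z
  have h0 : mulDerivCoeff f 0 = 0 := by simp [mulDerivCoeff]
  refine (hasSum_nat_add_iff' 1).mp ?_
  rw [Finset.sum_range_one, h0, zero_mul, sub_zero]
  refine hTaylor.congr_fun fun n => ?_
  rw [← iteratedDeriv_succ', mulDerivCoeff, Nat.factorial_succ]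
  push_cast
  field_simp
  ring

theorem exists_norm_mulDerivCoeff_le {f : ℂ → ℂ} {r : ℝ}
    (hf : DifferentiableOn ℂ f (Metric.ball 0 r)) (hr : 1 < r) :
    ∃ C, ∀ d, ‖mulDerivCoeff f d‖ ≤ C := by
  have h := (hasSum_mulDerivCoeff_mul_pow hf (z := 1) (by simpa using hr)).summable
  simp only [one_pow, mul_one] at h
  obtain ⟨C, hC⟩ := h.tendsto_atTop_zero.norm.isBoundedUnder_le.bddAbove_range
  exact ⟨C, fun d => hC ⟨d, rfl⟩⟩

theorem exists_one_lt_ball_subset {U : Set ℂ} (hU : IsOpen U)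
    (h : Metric.closedBall (0 : ℂ) 1 ⊆ U) : ∃ r, 1 < r ∧ Metric.ball (0 : ℂ) r ⊆ U := by
  obtain ⟨ε, hε, hsub⟩ := (isCompact_closedBall (0 : ℂ) 1).exists_thickening_subset_open hU h
  refine ⟨ε + 1, by linarith, ?_⟩
  rwa [← thickening_closedBall hε zero_le_one]

theorem LSeries.term_vonMangoldt_ofReal (t : ℝ) (k : ℕ) :
    LSeries.term ↗Λ t k = ((Λ k * (k : ℝ) ^ (-t) : ℝ) : ℂ) := by
  rcases eq_or_ne k 0 with rfl | hk
  · simp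
  rw [LSeries.term_of_ne_zero hk, Real.rpow_neg k.cast_nonneg, div_eq_mul_inv]
  push_cast
  rw [← Complex.ofReal_natCast, Complex.ofReal_cpow k.cast_nonneg]

theorem LSeries_vonMangoldt_ofReal (t : ℝ) :
    L ↗Λ t = ((∑' k, Λ k * (k : ℝ) ^ (-t) : ℝ) : ℂ) := by
  rw [LSeries, Complex.ofReal_tsum]
  exact tsum_congr (LSeries.term_vonMangoldt_ofReal t)

theorem LSeries.term_vonMangoldt_succ_mul (s : ℝ) (m k : ℕ) :
    LSeries.term ↗Λ ((((m : ℝ) + 1) * s : ℝ) : ℂ) k =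
      ((Λ k * ((k : ℝ) ^ (-s)) ^ (m + 1) : ℝ) : ℂ) := by
  rw [LSeries.term_vonMangoldt_ofReal, ← Real.rpow_mul_natCast k.cast_nonneg]
  push_cast
  ring_nf

theorem LSeries.norm_term_vonMangoldt_succ_mul_le {s : ℝ} (hs : 0 < s) (m k : ℕ) :
    ‖LSeries.term ↗Λ ((((m : ℝ) + 1) * s : ℝ) : ℂ) k‖ ≤
      ((2 : ℝ) ^ (-s)) ^ m * (Λ k * (k : ℝ) ^ (-s)) := by
  rw [LSeries.term_vonMangoldt_succ_mul, Complex.norm_real,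
    Real.norm_of_nonneg (mul_nonneg vonMangoldt_nonneg (by positivity))]
  rcases lt_or_ge k 2 with hk | hk
  · interval_cases k <;> simp
  have hk2 : (k : ℝ) ^ (-s) ≤ (2 : ℝ) ^ (-s) :=
    Real.rpow_le_rpow_of_nonpos two_pos (by exact_mod_cast hk) (by linarith)
  calc Λ k * ((k : ℝ) ^ (-s)) ^ (m + 1) = (Λ k * (k : ℝ) ^ (-s)) * ((k : ℝ) ^ (-s)) ^ m := by
        ring
    _ ≤ (Λ k * (k : ℝ) ^ (-s)) * ((2 : ℝ) ^ (-s)) ^ m := by gcongr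
    _ = _ := mul_comm _ _

theorem zetaR_eq_riemannZeta {x : ℝ} (hx : 1 < x) : (zetaR x : ℂ) = riemannZeta x := by
  rw [zeta_eq_tsum_one_div_nat_add_one_cpow (by simpa using hx), zetaR, Complex.ofReal_tsum]
  refine tsum_congr fun n => ?_
  rw [Real.rpow_neg (by positivity), Complex.ofReal_inv, ← one_div,
    Complex.ofReal_cpow (by positivity)]
  push_cast
  rfl

theorem hasDerivAt_zetaR {x : ℝ} (hx : 1 < x) :
    HasDerivAt zetaR (deriv riemannZeta x).re x := by
  have hx1 : (x : ℂ) ≠ 1 := by exact_mod_cast hx.ne'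
  refine (differentiableAt_riemannZeta hx1).hasDerivAt.real_of_complex.congr_of_eventuallyEq ?_
  filter_upwards [eventually_gt_nhds hx] with t ht
  rw [← zetaR_eq_riemannZeta ht, Complex.ofReal_re]

theorem zetaDerivR_div_zetaR {x : ℝ} (hx : 1 < x) :
    ((zetaDerivR x / zetaR x : ℝ) : ℂ) = -L ↗Λ x := by
  have hx' : 1 < (x : ℂ).re := by simpa using hx
  have hζ : zetaR x ≠ 0 := by
    rw [← Complex.ofReal_ne_zero, zetaR_eq_riemannZeta hx]
    exact riemannZeta_ne_zero_of_one_lt_re hx'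
  have hderiv : deriv riemannZeta x = ((-(∑' k, Λ k * (k : ℝ) ^ (-x)) * zetaR x : ℝ) : ℂ) := by
    have h := LSeries_vonMangoldt_eq_deriv_riemannZeta_div hx'
    rw [LSeries_vonMangoldt_ofReal, ← zetaR_eq_riemannZeta hx] at h
    rw [Complex.ofReal_mul, Complex.ofReal_neg, h, neg_div, neg_neg,
      div_mul_cancel₀ _ (Complex.ofReal_ne_zero.mpr hζ)]
  rw [zetaDerivR, (hasDerivAt_zetaR hx).deriv, hderiv, Complex.ofReal_re,
    mul_div_cancel_right₀ _ hζ, LSeries_vonMangoldt_ofReal, Complex.ofReal_neg]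

noncomputable def lambertTerm (b : ℕ → ℂ) (s : ℝ) (nk : ℕ × ℕ) : ℂ :=
  b (nk.1 + 1) * LSeries.term ↗Λ ((((nk.1 : ℝ) + 1) * s : ℝ) : ℂ) nk.2

theorem summable_lambertTerm {b : ℕ → ℂ} {C : ℝ} (hb : ∀ n, ‖b n‖ ≤ C * n) {s : ℝ}
    (hs : 1 < s) : Summable (lambertTerm b s) := by
  have hC : 0 ≤ C := by simpa using (norm_nonneg _).trans (hb 1)
  have hβ : ‖(2 : ℝ) ^ (-s)‖ < 1 := by
    rw [Real.norm_of_nonneg (by positivity)]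
    exact Real.rpow_lt_one_of_one_lt_of_neg one_lt_two (by linarith)
  have hΛ : Summable fun k : ℕ => Λ k * (k : ℝ) ^ (-s) := by
    refine Complex.summable_ofReal.mp ?_
    simp_rw [← LSeries.term_vonMangoldt_ofReal]
    exact LSeriesSummable_vonMangoldt (by simpa using hs)
  have hgeom : Summable fun n : ℕ => C * ((n : ℝ) + 1) * ((2 : ℝ) ^ (-s)) ^ n :=
    (((summable_pow_mul_geometric_of_norm_lt_one 1 hβ).add
      (summable_geometric_of_norm_lt_one hβ)).mul_left C).congr fun n => by ring
  refine Summable.of_norm_bounded (hgeom.mul_of_nonneg hΛ (fun n => by positivity)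
    fun k => mul_nonneg vonMangoldt_nonneg (by positivity)) fun nk => ?_
  rw [lambertTerm, norm_mul]
  calc ‖b (nk.1 + 1)‖ * ‖LSeries.term ↗Λ ((((nk.1 : ℝ) + 1) * s : ℝ) : ℂ) nk.2‖
      ≤ (C * ((nk.1 : ℝ) + 1)) * (((2 : ℝ) ^ (-s)) ^ nk.1 * (Λ nk.2 * (nk.2 : ℝ) ^ (-s))) := by
        gcongr
        · exact_mod_cast hb (nk.1 + 1)
        · exact LSeries.norm_term_vonMangoldt_succ_mul_le (by linarith) _ _
    _ = _ := by ring

theorem lambertTerm_prime_pow (b : ℕ → ℂ) (s : ℝ) {p : ℕ} (hp : p.Prime) (j n : ℕ) :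
    lambertTerm b s (n, p ^ (j + 1)) =
      Real.log p * (b (n + 1) * (((p : ℝ) ^ (-s) : ℝ) : ℂ) ^ ((j + 1) * (n + 1))) := by
  rw [lambertTerm, LSeries.term_vonMangoldt_succ_mul, vonMangoldt_apply_pow (by omega),
    vonMangoldt_apply_prime hp, Nat.cast_pow, ← Real.rpow_pow_comm (by positivity), ← pow_mul]
  push_cast
  ring

theorem hasSum_comp_primePow_iff {α : Type*} [AddCommMonoid α] [TopologicalSpace α]
    {F : ℕ × ℕ → α} {S : α} (hF : ∀ n k, Λ k = 0 → F (n, k) = 0) :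
    HasSum (fun x : Nat.Primes × ℕ × ℕ => F (x.2.2, (x.1 : ℕ) ^ (x.2.1 + 1))) S ↔
      HasSum F S := by
  refine Function.Injective.hasSum_iff
    (g := fun x : Nat.Primes × ℕ × ℕ => (x.2.2, (x.1 : ℕ) ^ (x.2.1 + 1))) ?_ ?_
  · rintro ⟨p, j, n⟩ ⟨q, i, m⟩ h
    simp only [Prod.mk.injEq] at h
    obtain ⟨hpq, hji⟩ := p.prop.pow_inj q.prop h.2
    simp [Subtype.ext hpq, hji, h.1]
  · rintro ⟨n, k⟩ hk
    refine hF n k ?_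
    by_contra hΛ
    obtain ⟨p, j, hp, hj, rfl⟩ := (isPrimePow_nat_iff _).mp (vonMangoldt_ne_zero_iff.mp hΛ)
    exact hk ⟨(⟨p, hp⟩, j - 1, n), by simp [Nat.sub_add_cancel hj]⟩

theorem hasSum_lambertTerm_prime_pow {f : ℂ → ℂ} {r : ℝ}
    (hf : DifferentiableOn ℂ f (Metric.ball 0 r)) (hr : 1 < r) {s : ℝ} (hs : 0 < s)
    (p : Nat.Primes)
    (h : Summable fun jn : ℕ × ℕ =>
      lambertTerm (moebiusTransform (mulDerivCoeff f)) s (jn.2, (p : ℕ) ^ (jn.1 + 1))) :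
    HasSum (fun jn : ℕ × ℕ =>
        lambertTerm (moebiusTransform (mulDerivCoeff f)) s (jn.2, (p : ℕ) ^ (jn.1 + 1)))
      (deriv f ((((p : ℕ) : ℝ) ^ (-s) : ℝ) : ℂ) * ((((p : ℕ) : ℝ) ^ (-s) : ℝ) : ℂ) *
        (Real.log ((p : ℕ) : ℝ) : ℂ)) := by
  set y : ℂ := ((((p : ℕ) : ℝ) ^ (-s) : ℝ) : ℂ)
  have hy : ‖y‖ < r := by
    rw [Complex.norm_real, Real.norm_of_nonneg (by positivity)]
    exact (Real.rpow_lt_one_of_one_lt_of_neg (by exact_mod_cast p.prop.one_lt)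
      (by linarith)).trans hr
  have hlog : (Real.log ((p : ℕ) : ℝ) : ℂ) ≠ 0 := by
    exact_mod_cast (Real.log_pos (by exact_mod_cast p.prop.one_lt)).ne'
  simp_rw [lambertTerm_prime_pow _ _ p.prop] at h ⊢
  rw [mul_comm _ (Real.log _ : ℂ)]
  refine (hasSum_lambert ((summable_mul_left_iff hlog).mp h) ?_).mul_left _
  convert hasSum_mulDerivCoeff_mul_pow hf hy using 2 with k
  rw [sum_divisors_moebiusTransform (by simp [mulDerivCoeff])]

theorem statement3_general (f : ℂ → ℂ) (U : Set ℂ) (hU : IsOpen U)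
    (hUball : Metric.closedBall (0 : ℂ) 1 ⊆ U)
    (hf : AnalyticOnNhd ℂ f U)
    (s : ℝ) (hs : 1 < s) :
    Summable
      (fun p : Nat.Primes =>
        deriv f ((((p : ℕ) : ℝ) ^ (-s) : ℝ) : ℂ) * ((((p : ℕ) : ℝ) ^ (-s) : ℝ) : ℂ) *
          (Real.log ((p : ℕ) : ℝ) : ℂ)) ∧
    HasSum
      (fun n : ℕ =>
        ((zetaDerivR (((n : ℝ) + 1) * s) / zetaR (((n : ℝ) + 1) * s) : ℝ) : ℂ) *
          ∑ d ∈ (n + 1).divisors,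
            (d : ℂ) * (iteratedDeriv d f 0 / (Nat.factorial d : ℂ)) *
              (ArithmeticFunction.moebius ((n + 1) / d) : ℂ))
      (-(∑' p : Nat.Primes,
          deriv f ((((p : ℕ) : ℝ) ^ (-s) : ℝ) : ℂ) * ((((p : ℕ) : ℝ) ^ (-s) : ℝ) : ℂ) *
            (Real.log ((p : ℕ) : ℝ) : ℂ))) := by
  obtain ⟨r, hr, hball⟩ := exists_one_lt_ball_subset hU hUball
  have hd : DifferentiableOn ℂ f (Metric.ball 0 r) := (hf.mono hball).differentiableOn
  obtain ⟨C, hC⟩ := exists_norm_mulDerivCoeff_le hd hr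
  set b := moebiusTransform (mulDerivCoeff f)
  have hg : Summable (lambertTerm b s) := summable_lambertTerm (norm_moebiusTransform_le hC) hs
  have hprimes := (hasSum_comp_primePow_iff fun n k hk => by
    rw [lambertTerm, LSeries.term_vonMangoldt_ofReal, hk, zero_mul, Complex.ofReal_zero,
      mul_zero]).mpr hg.hasSum
  have hp := hprimes.prod_fiberwise fun p =>
    hasSum_lambertTerm_prime_pow hd hr (by linarith) p (hprimes.summable.prod_factor p)
  have hn := hg.hasSum.prod_fiberwise fun n =>
    (LSeriesSummable_vonMangoldt (s := ((((n : ℝ) + 1) * s : ℝ) : ℂ))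
      (by rw [Complex.ofReal_re]; nlinarith)).LSeriesHasSum.mul_left (b (n + 1))
  refine ⟨hp.summable, ?_⟩
  rw [hp.tsum_eq]
  refine hn.neg.congr_fun fun n => ?_
  rw [zetaDerivR_div_zetaR (by nlinarith), neg_mul, mul_comm]
  rfl

/-- For `f` analytic on a neighbourhood of the closed unit disk with
`f 0 = 0` and every real `s > 1`,
`∑_{p prime} f'(p^{-s})·p^{-s}·log p = -∑_{n ≥ 1} (ζ'(ns)/ζ(ns)) · ∑_{d∣n} d·c_d·μ(n/d)`,
both series converging. -/
theorem statement3 (f : ℂ → ℂ) (U : Set ℂ) (hU : IsOpen U)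
    (hUball : Metric.closedBall (0 : ℂ) 1 ⊆ U)
    (hf : AnalyticOnNhd ℂ f U) (hf0 : f 0 = 0)
    (s : ℝ) (hs : 1 < s) :
    Summable
      (fun p : Nat.Primes =>
        deriv f ((((p : ℕ) : ℝ) ^ (-s) : ℝ) : ℂ) * ((((p : ℕ) : ℝ) ^ (-s) : ℝ) : ℂ) *
          (Real.log ((p : ℕ) : ℝ) : ℂ)) ∧
    HasSum
      (fun n : ℕ =>
        ((zetaDerivR (((n : ℝ) + 1) * s) / zetaR (((n : ℝ) + 1) * s) : ℝ) : ℂ) *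
          ∑ d ∈ (n + 1).divisors,
            (d : ℂ) * (iteratedDeriv d f 0 / (Nat.factorial d : ℂ)) *
              (ArithmeticFunction.moebius ((n + 1) / d) : ℂ))
      (-(∑' p : Nat.Primes,
          deriv f ((((p : ℕ) : ℝ) ^ (-s) : ℝ) : ℂ) * ((((p : ℕ) : ℝ) ^ (-s) : ℝ) : ℂ) *
            (Real.log ((p : ℕ) : ℝ) : ℂ))) :=
  statement3_general f U hU hUball hf s hs
end

section
/- Let s > 1 be real and M ≥ 1 an integer. Then |∑_{k=1}^{∞} p_k^{−s} − ∑_{n=1}^{M} (μ(n)/n) ∑_{k=1}^{∞} ∑_{l=1}^{∞} (1/l) p_k^{−snl}| ≤ (2^{s+2}(2^s + 1)(s + 1))/((2^s − 1)^3) · M^2 / ((sM + s − 1) 2^{sM}), where p_k denotes the k-th prime. -/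
/-!
For `|x| < 1`, expanding `-log (1 - x ^ n) = ∑ₗ x ^ (n l) / l` and collecting powers of `x`
gives `x - ∑_{n ≤ M} μ(n)/n · (-log (1 - x ^ n)) = ∑_N (x ^ N / N) ∑_{d ∣ N, d > M} μ(d)`,
because `∑_{d ∣ N} μ(d)` vanishes for `N > 1`. Only `N > M` contribute, with coefficients of
size at most `N`, so the error is at most `|x| ^ (M + 1) / (1 - |x|)`. Summing over
`x = p_k ^ (-s) ≤ 2 ^ (-s)` and comparing `∑ₖ p_k ^ (-t)`, `t = s (M + 1)`, with
`2 ^ (-t) + ∫_2^∞ y ^ (-t) dy` gives the bound.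
-/

open Real Finset ArithmeticFunction
open scoped ArithmeticFunction.Moebius

lemma sum_divisors_moebius_eq_ite {R : Type*} [Ring R] (N : ℕ) :
    ∑ n ∈ N.divisors, (μ n : R) = if N = 1 then 1 else 0 := by
  have := congr_arg (fun f : ArithmeticFunction R => f N) (coe_moebius_mul_coe_zeta (R := R))
  simp only [coe_mul_zeta_apply, one_apply] at this
  simpa using this

lemma hasSum_ite_dvd_pow_div {x : ℝ} (hx : |x| < 1) {n : ℕ} (hn : n ≠ 0) :
    HasSum (fun N : ℕ => if n ∣ N then x ^ N / N else 0) (-log (1 - x ^ n) / n) := by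
  have hxn : |x ^ n| < 1 := by
    rw [abs_pow]; exact pow_lt_one₀ (abs_nonneg x) hx hn
  have hmul : Function.Injective (fun l : ℕ => n * (l + 1)) := fun a b hab => by
    simpa using Nat.eq_of_mul_eq_mul_left (Nat.pos_of_ne_zero hn) hab
  refine (hmul.hasSum_iff ?_).mp (((hasSum_pow_div_log_of_abs_lt_one hxn).div_const n).congr_fun
    fun l => ?_)
  · rintro N hN
    split_ifs with hdvd
    · obtain ⟨q, rfl⟩ := hdvd
      rcases q with _ | l
      · simp -- the term at `N = 0` is `x ^ 0 / 0 = 0`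
      · exact absurd ⟨l, rfl⟩ hN
    · rfl
  · simp only [Function.comp_apply, dvd_mul_right, if_true, ← pow_mul]
    push_cast
    field_simp

lemma sum_moebius_divisors_filter_lt_eq_zero {M N : ℕ} (hNM : N ≤ M) :
    ∑ n ∈ N.divisors with M < n, (μ n : ℝ) = 0 :=
  sum_eq_zero fun n hn => by
    rw [mem_filter, Nat.mem_divisors] at hn
    exact absurd (Nat.le_of_dvd (Nat.pos_of_ne_zero hn.1.2) hn.1.1) (by omega)

lemma abs_sum_moebius_divisors_filter_le (M N : ℕ) :
    |∑ n ∈ N.divisors with M < n, (μ n : ℝ)| ≤ N :=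
  calc |∑ n ∈ N.divisors with M < n, (μ n : ℝ)|
      ≤ ∑ n ∈ N.divisors with M < n, |(μ n : ℝ)| := abs_sum_le_sum_abs _ _
    _ ≤ ∑ n ∈ N.divisors with M < n, 1 := sum_le_sum fun n _ => by exact_mod_cast abs_moebius_le_one
    _ ≤ N := by
      rw [sum_const, nsmul_one]
      exact_mod_cast (card_filter_le _ _).trans (Nat.card_divisors_le_self N)

lemma hasSum_sub_sum_moebius_neg_log {x : ℝ} (hx : |x| < 1) (M : ℕ) :
    HasSum (fun N : ℕ => (∑ n ∈ N.divisors with M < n, (μ n : ℝ)) * (x ^ N / N))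
      (x - ∑ n ∈ Icc 1 M, (μ n : ℝ) / n * -log (1 - x ^ n)) := by
  have hall : HasSum (fun N : ℕ => (∑ n ∈ N.divisors, (μ n : ℝ)) * (x ^ N / N)) x := by
    simp_rw [sum_divisors_moebius_eq_ite, ite_mul, one_mul, zero_mul]
    convert hasSum_ite_eq 1 x using 2 with N
    split_ifs with h <;> simp [h]
  have hsmall : HasSum (fun N : ℕ => ∑ n ∈ Icc 1 M, (μ n : ℝ) * if n ∣ N then x ^ N / N else 0)
      (∑ n ∈ Icc 1 M, (μ n : ℝ) * (-log (1 - x ^ n) / n)) :=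
    hasSum_sum fun n hn =>
      (hasSum_ite_dvd_pow_div hx (by rw [mem_Icc] at hn; omega)).mul_left _
  have hvalue : x - ∑ n ∈ Icc 1 M, (μ n : ℝ) / n * -log (1 - x ^ n)
      = x - ∑ n ∈ Icc 1 M, (μ n : ℝ) * (-log (1 - x ^ n) / n) := by
    congr 1
    exact sum_congr rfl fun n _ => by ring
  rw [hvalue]
  refine (hall.sub hsmall).congr_fun fun N => ?_
  rcases eq_or_ne N 0 with rfl | hN
  · simp
  have hfilter : {n ∈ Icc 1 M | n ∣ N} = {n ∈ N.divisors | ¬ M < n} := by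
    ext n
    simp only [mem_filter, mem_Icc, Nat.mem_divisors, not_lt]
    constructor
    · rintro ⟨⟨-, hnM⟩, hnN⟩
      exact ⟨⟨hnN, hN⟩, hnM⟩
    · rintro ⟨⟨hnN, -⟩, hnM⟩
      exact ⟨⟨Nat.pos_of_dvd_of_pos hnN (Nat.pos_of_ne_zero hN), hnM⟩, hnN⟩
  simp only [mul_ite, mul_zero]
  rw [← sum_filter, hfilter, ← sum_mul, ← sub_mul,
    ← sum_filter_add_sum_filter_not N.divisors (M < ·), add_sub_cancel_right]

lemma abs_sub_sum_moebius_neg_log_le {x : ℝ} (hx : |x| < 1) (M : ℕ) :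
    |x - ∑ n ∈ Icc 1 M, (μ n : ℝ) / n * -log (1 - x ^ n)| ≤ |x| ^ (M + 1) / (1 - |x|) := by
  have htail := (hasSum_nat_add_iff' (M + 1)).mpr (hasSum_sub_sum_moebius_neg_log hx M)
  have hhead : ∑ N ∈ range (M + 1), (∑ n ∈ N.divisors with M < n, (μ n : ℝ)) * (x ^ N / N) = 0 :=
    sum_eq_zero fun N hN => by
      rw [sum_moebius_divisors_filter_lt_eq_zero (by rw [mem_range] at hN; omega), zero_mul]
  rw [hhead, sub_zero] at htail
  have hgeom := (hasSum_geometric_of_lt_one (abs_nonneg x) hx).mul_left (|x| ^ (M + 1))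
  rw [← div_eq_mul_inv] at hgeom
  refine htail.norm_le_of_bounded hgeom fun j => ?_
  have hN : (0 : ℝ) < ↑(j + (M + 1)) := by positivity
  calc ‖(∑ n ∈ (j + (M + 1)).divisors with M < n, (μ n : ℝ)) * (x ^ (j + (M + 1)) / ↑(j + (M + 1)))‖
      ≤ ↑(j + (M + 1)) * (|x| ^ (j + (M + 1)) / ↑(j + (M + 1))) := by
        rw [Real.norm_eq_abs, abs_mul, abs_div, abs_pow, Nat.abs_cast]
        gcongr
        exact abs_sum_moebius_divisors_filter_le M _
    _ = |x| ^ (M + 1) * |x| ^ j := by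
        rw [mul_div_cancel₀ _ hN.ne', pow_add, mul_comm]

lemma abs_tsum_sub_sum_moebius_tsum_neg_log_le {ι : Type*} {x : ι → ℝ} {c : ℝ}
    (hx : Summable x) (hxc : ∀ i, |x i| ≤ c) (hc : c < 1) (M : ℕ) :
    |∑' i, x i - ∑ n ∈ Icc 1 M, (μ n : ℝ) / n * ∑' i, -log (1 - x i ^ n)|
      ≤ (∑' i, |x i| ^ (M + 1)) / (1 - c) := by
  have hpow_le {n : ℕ} (hn : n ≠ 0) (i : ι) : |x i| ^ n ≤ |x i| :=
    pow_le_of_le_one (abs_nonneg _) ((hxc i).trans hc.le) hn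
  have hlog : ∀ n ∈ Icc 1 M, Summable fun i => (μ n : ℝ) / n * -log (1 - x i ^ n) := by
    intro n hn
    have hpow : Summable fun i => -x i ^ n :=
      (hx.abs.of_nonneg_of_le (fun i => abs_nonneg _)
        fun i => by rw [abs_neg, abs_pow]; exact hpow_le (by rw [mem_Icc] at hn; omega) i).of_abs
    simpa only [← sub_eq_add_neg] using ((Real.summable_log_one_add_of_summable hpow).neg).mul_left
      ((μ n : ℝ) / n)
  have herror : Summable fun i => |x i| ^ (M + 1) / (1 - c) :=
    (hx.abs.of_nonneg_of_le (fun i => by positivity) fun i => hpow_le (by omega) i).div_const _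
  simp_rw [← tsum_mul_left]
  rw [← Summable.tsum_finsetSum hlog, ← Summable.tsum_sub hx (summable_sum hlog), ← tsum_div_const]
  refine tsum_of_norm_bounded (E := ℝ) herror.hasSum fun i => ?_
  refine (abs_sub_sum_moebius_neg_log_le ((hxc i).trans_lt hc) M).trans ?_
  gcongr
  linarith [hxc i]

lemma integral_rpow_neg_le {t : ℝ} (ht : 1 < t) {a b : ℝ} (ha : 0 < a) (hab : a ≤ b) :
    ∫ y in a..b, y ^ (-t) ≤ a ^ (1 - t) / (t - 1) := by
  have hzero : (0 : ℝ) ∉ Set.uIcc a b := by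
    rw [Set.uIcc_of_le hab]
    exact fun h => h.1.not_gt ha
  rw [integral_rpow (Or.inr ⟨by linarith, hzero⟩), show -t + 1 = -(t - 1) by ring, div_neg,
    ← neg_div, neg_sub]
  have hb : 0 ≤ b ^ (-(t - 1)) := rpow_nonneg (ha.le.trans hab) _
  rw [show 1 - t = -(t - 1) by ring]
  gcongr
  linarith

lemma sum_range_nth_prime_rpow_neg_le {t : ℝ} (ht : 1 < t) (n : ℕ) :
    ∑ k ∈ range n, ((Nat.nth Nat.Prime k : ℕ) : ℝ) ^ (-t) ≤ 2 ^ (-t) * ((t + 1) / (t - 1)) := by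
  have hbound : (0 : ℝ) ≤ 2 ^ (-t) * ((t + 1) / (t - 1)) := by
    have : 0 < t - 1 := by linarith
    positivity
  rcases n with _ | n
  · simpa using hbound
  have htail : ∑ k ∈ range n, ((Nat.nth Nat.Prime (k + 1) : ℕ) : ℝ) ^ (-t)
      ≤ ∫ y in (2 : ℝ)..2 + n, y ^ (-t) := by
    refine le_trans (sum_le_sum fun k _ => ?_) (AntitoneOn.sum_le_integral
      ((antitoneOn_rpow_Ioi_of_exponent_nonpos (by linarith)).mono fun y hy => ?_))
    · refine rpow_le_rpow_of_nonpos (by positivity) ?_ (by linarith)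
      have := Nat.add_two_le_nth_prime (k + 1)
      push_cast
      exact_mod_cast (by omega : 2 + (k + 1) ≤ Nat.nth Nat.Prime (k + 1))
    · exact lt_of_lt_of_le two_pos hy.1
  rw [sum_range_succ', Nat.nth_prime_zero_eq_two]
  have h2 : (2 : ℝ) ^ (1 - t) = 2 * 2 ^ (-t) := by
    rw [sub_eq_add_neg, rpow_add two_pos, rpow_one]
  have hintegral := htail.trans (integral_rpow_neg_le ht two_pos (by simp))
  rw [h2] at hintegral
  have hrhs : (2 : ℝ) ^ (-t) * ((t + 1) / (t - 1)) = 2 * 2 ^ (-t) / (t - 1) + 2 ^ (-t) := by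
    field_simp [show t - 1 ≠ 0 by linarith]; ring
  push_cast
  linarith

lemma tsum_one_div_mul_rpow_neg_eq_neg_log {p s : ℝ} (hp : 0 < p) (hps : p ^ (-s) < 1)
    {n : ℕ} (hn : n ≠ 0) :
    ∑' l : ℕ, 1 / ((l : ℝ) + 1) * p ^ (-(s * n * ((l : ℝ) + 1))) = -log (1 - (p ^ (-s)) ^ n) := by
  have hy : |(p ^ (-s)) ^ n| < 1 := by
    rw [abs_of_nonneg (by positivity)]
    exact pow_lt_one₀ (by positivity) hps hn
  refine ((hasSum_pow_div_log_of_abs_lt_one hy).congr_fun fun l => ?_).tsum_eq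
  rw [← pow_mul, ← rpow_natCast, ← rpow_mul hp.le]
  push_cast
  ring_nf

lemma tail_estimate_le_explicit_bound {s : ℝ} (hs : 1 < s) {M : ℕ} (hM : 1 ≤ M) :
    (2 : ℝ) ^ (-(s * (M + 1))) * ((s * (M + 1) + 1) / (s * (M + 1) - 1)) / (1 - 2 ^ (-s))
      ≤ (2 : ℝ) ^ (s + 2) * ((2 : ℝ) ^ s + 1) * (s + 1) / ((2 : ℝ) ^ s - 1) ^ 3 *
        (M : ℝ) ^ 2 / ((s * M + s - 1) * (2 : ℝ) ^ (s * M)) := by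
  have hM : (1 : ℝ) ≤ M := by exact_mod_cast hM
  set a : ℝ := 2 ^ s with ha
  set b : ℝ := 2 ^ (s * M)
  have ha2 : 2 < a := by simpa using rpow_lt_rpow_of_exponent_lt one_lt_two hs
  have hb : 0 < b := by positivity
  have hsM : 0 < s * M + s - 1 := by nlinarith
  have hneg : (2 : ℝ) ^ (-s) = a⁻¹ := rpow_neg zero_le_two s
  have hnegt : (2 : ℝ) ^ (-(s * (M + 1))) = (a * b)⁻¹ := by
    rw [rpow_neg zero_le_two, mul_add_one, rpow_add two_pos, mul_comm b]
  have hfour : (2 : ℝ) ^ (s + 2) = 4 * a := by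
    rw [rpow_add two_pos, rpow_two, ← ha]
    ring
  have hlhs : (2 : ℝ) ^ (-(s * (M + 1))) * ((s * (M + 1) + 1) / (s * (M + 1) - 1)) / (1 - 2 ^ (-s))
      = (s * M + s + 1) / ((a - 1) * b * (s * M + s - 1)) := by
    rw [hneg, hnegt]
    field_simp [show a - 1 ≠ 0 by linarith, show s * (M + 1) - 1 ≠ 0 by nlinarith]
  have hrhs :
      (2 : ℝ) ^ (s + 2) * (a + 1) * (s + 1) / (a - 1) ^ 3 * (M : ℝ) ^ 2 / ((s * M + s - 1) * b)
        = 4 * a * (a + 1) * (s + 1) * M ^ 2 / (a - 1) ^ 2 / ((a - 1) * b * (s * M + s - 1)) := by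
    rw [hfour]
    field_simp [show a - 1 ≠ 0 by linarith]
  have hden : 0 < (a - 1) * b * (s * M + s - 1) := mul_pos (mul_pos (by linarith) hb) hsM
  rw [hlhs, hrhs]
  refine div_le_div_of_nonneg_right ?_ hden.le
  rw [le_div_iff₀ (by nlinarith)]
  calc (s * M + s + 1) * (a - 1) ^ 2 ≤ (4 * (s + 1) * M ^ 2) * (a * (a + 1)) := by
        gcongr
        · nlinarith [mul_le_mul_of_nonneg_left hM (by positivity : (0 : ℝ) ≤ (s + 1) * M)]
        · nlinarith
    _ = 4 * a * (a + 1) * (s + 1) * M ^ 2 := by ring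

/-- For real `s > 1` and integer `M ≥ 1`,
`|∑_k p_k^{-s} - ∑_{n ≤ M} (μ(n)/n) ∑_k ∑_l (1/l) p_k^{-snl}|
  ≤ 2^{s+2}(2^s+1)(s+1)/(2^s-1)³ · M²/((sM+s-1)·2^{sM})`. -/
theorem statement8 (s : ℝ) (hs : 1 < s) (M : ℕ) (hM : 1 ≤ M) :
    |(∑' k : ℕ, ((Nat.nth Nat.Prime k : ℕ) : ℝ) ^ (-s)) -
        ∑ n ∈ Finset.Icc 1 M,
          ((ArithmeticFunction.moebius n : ℝ) / (n : ℝ)) *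
            ∑' (k : ℕ) (l : ℕ),
              (1 / ((l : ℝ) + 1)) *
                ((Nat.nth Nat.Prime k : ℕ) : ℝ) ^ (-(s * (n : ℝ) * ((l : ℝ) + 1)))| ≤
      (2 : ℝ) ^ (s + 2) * ((2 : ℝ) ^ s + 1) * (s + 1) / ((2 : ℝ) ^ s - 1) ^ 3 *
        (M : ℝ) ^ 2 / ((s * M + s - 1) * (2 : ℝ) ^ (s * M)) := by
  have hp (k : ℕ) : (2 : ℝ) ≤ Nat.nth Nat.Prime k := mod_cast (Nat.prime_nth_prime k).two_le
  have hc : (2 : ℝ) ^ (-s) < 1 := rpow_lt_one_of_one_lt_of_neg one_lt_two (by linarith)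
  have hxc (k : ℕ) : |((Nat.nth Nat.Prime k : ℕ) : ℝ) ^ (-s)| ≤ 2 ^ (-s) := by
    rw [abs_of_nonneg (by positivity)]
    exact rpow_le_rpow_of_nonpos two_pos (hp k) (by linarith)
  have hx : Summable fun k => ((Nat.nth Nat.Prime k : ℕ) : ℝ) ^ (-s) :=
    summable_of_sum_range_le (fun k => by positivity) (sum_range_nth_prime_rpow_neg_le hs)
  have hpow (k : ℕ) : |((Nat.nth Nat.Prime k : ℕ) : ℝ) ^ (-s)| ^ (M + 1)
      = ((Nat.nth Nat.Prime k : ℕ) : ℝ) ^ (-(s * (M + 1))) := by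
    rw [abs_of_nonneg (by positivity), ← rpow_natCast, ← rpow_mul (by positivity)]
    push_cast
    ring_nf
  rw [sum_congr rfl fun n hn => by
    rw [tsum_congr fun k => tsum_one_div_mul_rpow_neg_eq_neg_log (by linarith [hp k])
      ((le_abs_self _).trans (hxc k) |>.trans_lt hc) (by rw [mem_Icc] at hn; omega)]]
  calc _ ≤ (∑' k, |((Nat.nth Nat.Prime k : ℕ) : ℝ) ^ (-s)| ^ (M + 1)) / (1 - 2 ^ (-s)) :=
        abs_tsum_sub_sum_moebius_tsum_neg_log_le hx hxc hc M
    _ ≤ 2 ^ (-(s * (M + 1))) * ((s * (M + 1) + 1) / (s * (M + 1) - 1)) / (1 - 2 ^ (-s)) := by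
        simp_rw [hpow]
        gcongr
        exact Real.tsum_le_of_sum_range_le (fun k => by positivity)
          (sum_range_nth_prime_rpow_neg_le (by nlinarith))
    _ ≤ _ := tail_estimate_le_explicit_bound hs hM
end

section
/- For every integer M ≥ 2, ∑_{n=M+1}^{∞} n · |ζ'(n)| ≤ (2M + 4) · |ζ'(M + 1)|, where ζ' is the derivative of the Riemann zeta function, so that |ζ'(x)| = ∑_{k=2}^{∞} (log k)/k^x for x > 1. -/
/-!
In `|ζ'(x)| = ∑_{k ≥ 2} (log k) k^{-x}` every term shrinks at least by the factor `2^{-t}` when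
`x` is replaced by `x + t`, so `|ζ'(x + n)| ≤ 2^{-n} |ζ'(x)|`. Summing against the weights `x + n`
gives `∑_n (x + n) 2^{-n} = 2x + 2`, which is `2M + 4` for `x = M + 1`.
-/

open Real

lemma log_natCast_add_one_mul_rpow_nonneg (n : ℕ) (x : ℝ) :
    0 ≤ log ((n : ℝ) + 1) * ((n : ℝ) + 1) ^ x :=
  mul_nonneg (log_nonneg (by linarith [n.cast_nonneg (α := ℝ)])) (by positivity)

section

variable {x : ℝ}

lemma summable_natCast_add_one_rpow_neg (hx : 1 < x) :
    Summable fun n : ℕ => ((n : ℝ) + 1) ^ (-x) := by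
  simpa using (summable_nat_add_iff 1).2 (summable_nat_rpow.2 (by linarith : -x < -1))

lemma summable_log_mul_natCast_add_one_rpow_neg (hx : 1 < x) :
    Summable fun n : ℕ => log ((n : ℝ) + 1) * ((n : ℝ) + 1) ^ (-x) := by
  set ε := (x - 1) / 2
  have hε : 0 < ε := by simp only [ε]; linarith
  refine ((summable_natCast_add_one_rpow_neg (x := x - ε) (by simp only [ε]; linarith)).mul_left
    ε⁻¹).of_nonneg_of_le (fun n => log_natCast_add_one_mul_rpow_nonneg n _) (fun n => ?_)
  have hpos : (0 : ℝ) < (n : ℝ) + 1 := by positivity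
  calc log ((n : ℝ) + 1) * ((n : ℝ) + 1) ^ (-x)
      ≤ ((n : ℝ) + 1) ^ ε / ε * ((n : ℝ) + 1) ^ (-x) := by
        gcongr; exact log_le_rpow_div hpos.le hε
    _ = ε⁻¹ * ((n : ℝ) + 1) ^ (-(x - ε)) := by
        rw [div_mul_eq_mul_div, ← rpow_add hpos]; ring_nf

lemma hasDerivAt_zetaR_s14 (hx : 1 < x) :
    HasDerivAt zetaR (-∑' n : ℕ, log ((n : ℝ) + 1) * ((n : ℝ) + 1) ^ (-x)) x := by
  -- on `(a, ∞)` with `1 < a < x` the termwise derivatives are dominated by a summable series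
  set a := (1 + x) / 2
  have ha : 1 < a := by simp only [a]; linarith
  have hxa : x ∈ Set.Ioi a := by simp only [a, Set.mem_Ioi]; linarith
  rw [← tsum_neg]
  refine hasDerivAt_tsum_of_isPreconnected (g := fun (n : ℕ) (y : ℝ) => ((n : ℝ) + 1) ^ (-y))
    (g' := fun (n : ℕ) (y : ℝ) => -(log ((n : ℝ) + 1) * ((n : ℝ) + 1) ^ (-y)))
    (summable_log_mul_natCast_add_one_rpow_neg ha)
    isOpen_Ioi isPreconnected_Ioi (fun n y _ => ?_) (fun n y hy => ?_) hxa
    (summable_natCast_add_one_rpow_neg hx) hxa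
  · have hpos : (0 : ℝ) < (n : ℝ) + 1 := by positivity
    exact ((hasStrictDerivAt_const_rpow hpos (-y)).hasDerivAt.comp y
      (hasDerivAt_neg y)).congr_deriv (by ring)
  · rw [norm_neg, norm_of_nonneg (log_natCast_add_one_mul_rpow_nonneg n _)]
    gcongr
    · exact log_nonneg (by linarith [n.cast_nonneg (α := ℝ)])
    · linarith [n.cast_nonneg (α := ℝ)]
    · exact le_of_lt hy

lemma abs_zetaDerivR (hx : 1 < x) :
    |zetaDerivR x| = ∑' n : ℕ, log ((n : ℝ) + 1) * ((n : ℝ) + 1) ^ (-x) := by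
  rw [zetaDerivR, (hasDerivAt_zetaR_s14 hx).deriv, abs_neg,
    abs_of_nonneg (tsum_nonneg fun n => log_natCast_add_one_mul_rpow_nonneg n _)]

lemma abs_zetaDerivR_add_le (hx : 1 < x) {t : ℝ} (ht : 0 ≤ t) :
    |zetaDerivR (x + t)| ≤ 2 ^ (-t) * |zetaDerivR x| := by
  have hxt : 1 < x + t := by linarith
  rw [abs_zetaDerivR hx, abs_zetaDerivR hxt, ← tsum_mul_left]
  refine (summable_log_mul_natCast_add_one_rpow_neg hxt).tsum_le_tsum (fun k => ?_)
    ((summable_log_mul_natCast_add_one_rpow_neg hx).mul_left _)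
  -- the `k = 0` term vanishes because `log 1 = 0`; all other bases are at least `2`
  rcases k.eq_zero_or_pos with rfl | hk
  · simp
  have hk2 : (2 : ℝ) ≤ (k : ℝ) + 1 := by
    have : (1 : ℝ) ≤ k := by exact_mod_cast hk
    linarith
  calc log ((k : ℝ) + 1) * ((k : ℝ) + 1) ^ (-(x + t))
      = ((k : ℝ) + 1) ^ (-t) * (log ((k : ℝ) + 1) * ((k : ℝ) + 1) ^ (-x)) := by
        rw [neg_add, rpow_add (by linarith)]; ring
    _ ≤ 2 ^ (-t) * (log ((k : ℝ) + 1) * ((k : ℝ) + 1) ^ (-x)) :=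
        mul_le_mul_of_nonneg_right (rpow_le_rpow_of_nonpos two_pos hk2 (neg_nonpos.2 ht))
          (log_natCast_add_one_mul_rpow_nonneg k _)

end

lemma hasSum_add_mul_geometric_two (a : ℝ) :
    HasSum (fun n : ℕ => (a + n) * (1 / 2) ^ n) (2 * a + 2) := by
  have h := (hasSum_geometric_two.mul_left a).add
    (hasSum_coe_mul_geometric_of_norm_lt_one (r := (1 / 2 : ℝ)) (by norm_num))
  rw [show 2 * a + 2 = a * 2 + 1 / 2 / (1 - 1 / 2) ^ 2 by norm_num; ring]
  exact h.congr_fun fun n => by ring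

theorem summable_and_tsum_add_mul_abs_zetaDerivR_add_le {x : ℝ} (hx : 1 < x) :
    Summable (fun n : ℕ => (x + n) * |zetaDerivR (x + n)|) ∧
    (∑' n : ℕ, (x + n) * |zetaDerivR (x + n)|) ≤ (2 * x + 2) * |zetaDerivR x| := by
  have hbound := (hasSum_add_mul_geometric_two x).mul_right |zetaDerivR x|
  have hle (n : ℕ) :
      (x + n) * |zetaDerivR (x + n)| ≤ (x + n) * (1 / 2) ^ n * |zetaDerivR x| := by
    have h2 : (2 : ℝ) ^ (-(n : ℝ)) = (1 / 2) ^ n := by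
      rw [rpow_neg two_pos.le, rpow_natCast, one_div, inv_pow]
    rw [mul_assoc, ← h2]
    exact mul_le_mul_of_nonneg_left (abs_zetaDerivR_add_le hx n.cast_nonneg) (by positivity)
  have hsum : Summable fun n : ℕ => (x + n) * |zetaDerivR (x + n)| :=
    hbound.summable.of_nonneg_of_le (fun n => mul_nonneg (by positivity) (abs_nonneg _)) hle
  exact ⟨hsum, hsum.tsum_le_tsum hle hbound.summable |>.trans_eq hbound.tsum_eq⟩

/-- For every integer `M ≥ 2`,
`∑_{n > M} n·|ζ'(n)| ≤ (2M+4)·|ζ'(M+1)|` (the series converging). -/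
theorem statement14 (M : ℕ) (hM : 2 ≤ M) :
    Summable (fun n : ℕ => ((n : ℝ) + M + 1) * |zetaDerivR ((n : ℝ) + M + 1)|) ∧
    (∑' n : ℕ, ((n : ℝ) + M + 1) * |zetaDerivR ((n : ℝ) + M + 1)|) ≤
      (2 * (M : ℝ) + 4) * |zetaDerivR ((M : ℝ) + 1)| := by
  have hx : (1 : ℝ) < M + 1 := by
    have : (2 : ℝ) ≤ M := by exact_mod_cast hM
    linarith
  have hshift (n : ℕ) : (n : ℝ) + M + 1 = (M + 1 : ℝ) + n := by ring
  simp only [hshift]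
  convert summable_and_tsum_add_mul_abs_zetaDerivR_add_le hx using 3
  ring
end
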